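/- The canonical model obtained by forward chaining is the least model: if the forward-chaining process on an RL knowledge base (A, T) terminates in an interpretation I* without triggering any ⊥-rule, then I* is a model of (A, T), and for every model J of (A, T) with the same domain, I* ≤ J pointwise (every concept extension of I* is contained in that of J, and likewise for roles). -/
import Mathlib


/-- A role name or its inverse. -/
inductive RoleE (R : Type) where
  | name : R → RoleE R
  | inv : R → RoleE R

/-- RL rule bodies: concept names, conjunction, and existential restriction. -/
inductive Body (C R : Type) where
  | atom : C → Body C R
  | inter : Body C R → Body C R → Body C R
  | ex : RoleE R → Body C R → Body C R

/-- RL TBox rules: B ⊑ A, B ⊑ ⊥, and role inclusions R₁ ⊑ R₂. -/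
inductive Rule (C R : Type) where
  | conc : Body C R → C → Rule C R
  | bot : Body C R → Rule C R
  | rinc : RoleE R → RoleE R → Rule C R

structure Interp (C R D : Type) where
  con : C → Set D
  rol : R → Set (D × D)

def Interp.evalRole {C R D : Type} (I : Interp C R D) : RoleE R → Set (D × D)
  | .name r => I.rol r
  | .inv r => {p | (p.2, p.1) ∈ I.rol r}

def Interp.eval {C R D : Type} (I : Interp C R D) : Body C R → Set D
  | .atom c => I.con c
  | .inter b1 b2 => I.eval b1 ∩ I.eval b2
  | .ex ρ b => {x | ∃ y, y ∈ I.eval b ∧ (x, y) ∈ I.evalRole ρ}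

inductive Assertion (C R D : Type) where
  | conc : C → D → Assertion C R D
  | role : R → D → D → Assertion C R D

def Interp.satA {C R D : Type} (I : Interp C R D) : Assertion C R D → Prop
  | .conc c a => a ∈ I.con c
  | .role r a b => (a, b) ∈ I.rol r

def Interp.modelsA {C R D : Type} (I : Interp C R D) (A : Set (Assertion C R D)) : Prop :=
  ∀ φ ∈ A, I.satA φ

def Interp.satRule {C R D : Type} (I : Interp C R D) : Rule C R → Prop
  | .conc B A => I.eval B ⊆ I.con A
  | .bot B => I.eval B = ∅
  | .rinc ρ1 ρ2 => I.evalRole ρ1 ⊆ I.evalRole ρ2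

def Interp.modelsT {C R D : Type} (I : Interp C R D) (T : List (Rule C R)) : Prop :=
  ∀ r ∈ T, I.satRule r

/-- Pointwise containment of interpretations. -/
def Interp.le {C R D : Type} (I J : Interp C R D) : Prop :=
  (∀ c, I.con c ⊆ J.con c) ∧ ∀ r, I.rol r ⊆ J.rol r

/-- The canonical (least) model of an ABox w.r.t. a TBox. -/
def IsCanon {C R D : Type} (T : List (Rule C R)) (A : Set (Assertion C R D))
    (I : Interp C R D) : Prop :=
  I.modelsA A ∧ I.modelsT T ∧ ∀ J : Interp C R D, J.modelsA A → J.modelsT T → I.le J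

def RoleE.base {R : Type} : RoleE R → R
  | .name r => r
  | .inv r => r

def RoleE.orient {R D : Type} : RoleE R → D × D → D × D
  | .name _, p => p
  | .inv _, p => (p.2, p.1)

/-- The standard interpretation of an ABox: exactly the asserted facts. -/
def stdInterp {C R D : Type} (A : Set (Assertion C R D)) : Interp C R D :=
  ⟨fun c => {a | Assertion.conc c a ∈ A}, fun r => {p | Assertion.role r p.1 p.2 ∈ A}⟩

/-- One round of forward chaining: add all rule heads whose bodies hold. -/
def applyStep {C R D : Type} (T : List (Rule C R)) (I : Interp C R D) : Interp C R D :=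
  ⟨fun c => I.con c ∪ {x | ∃ B, Rule.conc B c ∈ T ∧ x ∈ I.eval B},
   fun r => I.rol r ∪
     {q | ∃ ρ1 ρ2, ∃ p : D × D, Rule.rinc ρ1 ρ2 ∈ T ∧ p ∈ I.evalRole ρ1 ∧
       r = RoleE.base ρ2 ∧ q = RoleE.orient ρ2 p}⟩

lemma evalRole_mono {C R D : Type} {I J : Interp C R D} (h : I.le J) (ρ : RoleE R) :
    I.evalRole ρ ⊆ J.evalRole ρ := by
  cases ρ with
  | name r => exact h.2 r
  | inv r => intro p hp; exact h.2 r hp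

lemma eval_mono {C R D : Type} {I J : Interp C R D} (h : I.le J) (B : Body C R) :
    I.eval B ⊆ J.eval B := by
  induction B with
  | atom c => exact h.1 c
  | inter b1 b2 ih1 ih2 => exact fun x hx => ⟨ih1 hx.1, ih2 hx.2⟩
  | ex ρ b ih =>
    rintro x ⟨y, hy, hxy⟩
    exact ⟨y, ih hy, evalRole_mono h ρ hxy⟩

lemma applyStep_incr {C R D : Type} (T : List (Rule C R)) (I : Interp C R D) :
    I.le (applyStep T I) :=
  ⟨fun c => Set.subset_union_left, fun r => Set.subset_union_left⟩

lemma interpLeRefl {C R D : Type} (I : Interp C R D) : I.le I :=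
  ⟨fun _ => subset_rfl, fun _ => subset_rfl⟩

lemma interpLeTrans {C R D : Type} {I J K : Interp C R D} (h1 : I.le J) (h2 : J.le K) :
    I.le K :=
  ⟨fun c => (h1.1 c).trans (h2.1 c), fun r => (h1.2 r).trans (h2.2 r)⟩

lemma applyStep_le {C R D : Type} {T : List (Rule C R)} {I J : Interp C R D}
    (hJ : J.modelsT T) (h : I.le J) : (applyStep T I).le J := by
  constructor
  · intro c x hx
    rcases hx with hx | ⟨B, hBT, hxB⟩
    · exact h.1 c hx
    · exact hJ _ hBT (eval_mono h B hxB)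
  · intro r q hq
    rcases hq with hq | ⟨ρ1, ρ2, p, hT, hp, hr, hq⟩
    · exact h.2 r hq
    · subst hr; subst hq
      have : p ∈ J.evalRole ρ2 := hJ _ hT (evalRole_mono h ρ1 hp)
      cases ρ2 with
      | name r => exact this
      | inv r => exact this

/-- if forward chaining from the standard interpretation of A reaches a
fixpoint I* without triggering any ⊥-rule, then I* is a model of (A, T) and is the
least such model (pointwise below every model of (A, T) on the same domain). -/
theorem forward_chaining_least_model {C R D : Type}
    (T : List (Rule C R)) (A : Set (Assertion C R D)) (Istar : Interp C R D) (n : ℕ)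
    (hreach : Istar = (applyStep T)^[n] (stdInterp A))
    (hfix : applyStep T Istar = Istar)
    (hbot : ∀ B, Rule.bot B ∈ T → Istar.eval B = ∅) :
    (Istar.modelsA A ∧ Istar.modelsT T) ∧
    ∀ J : Interp C R D, J.modelsA A → J.modelsT T → Istar.le J := by
  subst hreach
  set Istar := (applyStep T)^[n] (stdInterp A) with hdef
  have hle : (stdInterp A).le Istar := by
    rw [hdef]
    clear hfix hbot hdef
    induction n with
    | zero => exact interpLeRefl _
    | succ k ih =>
      rw [Function.iterate_succ_apply']
      exact interpLeTrans ih (applyStep_incr T _)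
  have hmA : Istar.modelsA A := by
    intro φ hφ
    cases φ with
    | conc c a => exact hle.1 c hφ
    | role r a b => exact hle.2 r hφ
  refine ⟨⟨hmA, ?_⟩, ?_⟩
  · intro ru hru
    cases ru with
    | conc B c =>
      intro x hx
      have : x ∈ (applyStep T Istar).con c := Or.inr ⟨B, hru, hx⟩
      rwa [hfix] at this
    | bot B => exact hbot B hru
    | rinc ρ1 ρ2 =>
      intro p hp
      have key : RoleE.orient ρ2 p ∈ (applyStep T Istar).rol (RoleE.base ρ2) :=
        Or.inr ⟨ρ1, ρ2, p, hru, hp, rfl, rfl⟩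
      rw [hfix] at key
      cases ρ2 with
      | name r => exact key
      | inv r => exact key
  · intro J hJA hJT
    have hstd : (stdInterp A).le J :=
      ⟨fun c x hx => hJA _ hx, fun r p hp => hJA _ hp⟩
    rw [hdef]
    clear hfix hbot hdef hle hmA
    induction n with
    | zero => exact hstd
    | succ k ih =>
      rw [Function.iterate_succ_apply']
      exact applyStep_le hJT ih
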